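/- arXiv:2107.06241 — 2 statements merged into one kernel-verified Lean document; each statement's English description precedes it below -/
import Mathlib

section
/- Assume q ≡ 3 (mod 8) or q ≡ 5 (mod 8). Then every Sylow 2-subgroup of PSL₂(F) is a Klein four-group, i.e. isomorphic to C₂ × C₂. -/
/-!
For `A ∈ SL₂(F)`, Cayley–Hamilton gives `A² = (tr A) • A - 1`, so a non-central `A` whose square
is central has trace `0`. Applied to `A = x²` for `x` of order `4` in `PSL₂(F)`, this gives
`tr(x)² - 2 = tr(x²) = 0`, i.e. `2` is a square in `F`, which fails for `q ≡ ±3 (mod 8)`. Hence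
`PSL₂(F)` has no elements of order `4`, while `|PSL₂(F)| = q(q² - 1)/2 ≡ 4 (mod 8)`, so its Sylow
`2`-subgroups have order `4` and exponent `2`.
-/

open Matrix
open scoped MatrixGroups

theorem Nat.mul_sq_sub_one_mod_sixteen {q : ℕ} (hq : q % 8 = 3 ∨ q % 8 = 5) :
    q * (q ^ 2 - 1) % 16 = 8 := by
  have hq1 : 1 ≤ q ^ 2 := Nat.one_le_pow _ _ (by omega)
  have h : ((q * (q ^ 2 - 1) : ℕ) : ZMod 16) = 8 := by
    push_cast [hq1]
    rw [← ZMod.natCast_mod q 16]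
    obtain h | h | h | h : q % 16 = 3 ∨ q % 16 = 5 ∨ q % 16 = 11 ∨ q % 16 = 13 := by omega
    all_goals rw [h]; decide
  rw [← ZMod.val_natCast, h]
  rfl

theorem Nat.factorization_two_eq_two_of_mod_eight {n : ℕ} (hn : n % 8 = 4) :
    n.factorization 2 = 2 := by
  have hn0 : n ≠ 0 := by omega
  have h4 : 2 ≤ n.factorization 2 :=
    (Nat.prime_two.pow_dvd_iff_le_factorization hn0).mp (by omega)
  have h8 : ¬3 ≤ n.factorization 2 :=
    fun h => by have := (Nat.prime_two.pow_dvd_iff_le_factorization hn0).mpr h; omega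
  omega

theorem IsKleinFour.of_card_eq_four {G : Type*} [Group G] (hcard : Nat.card G = 4)
    (hsq : ∀ g : G, g ^ 2 = 1) : IsKleinFour G where
  card_four := hcard
  exponent_two :=
    have : Finite G := Nat.finite_of_card_ne_zero (by omega)
    have : Nontrivial G := Finite.one_lt_card_iff_nontrivial.mp (by omega)
    (Monoid.exponent_eq_prime_iff Nat.prime_two).mpr fun g hg => orderOf_eq_prime (hsq g) hg

namespace Matrix.SpecialLinearGroup

theorem card_center_fin_two {F : Type*} [Field F] (hF : ringChar F ≠ 2) :
    Nat.card (Subgroup.center SL(2, F)) = 2 := by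
  rw [Nat.card_congr (center_equiv_rootsOfUnity' 0).toEquiv, Fintype.card_fin,
    (IsPrimitiveRoot.neg_one (ringChar F) hF).card_rootsOfUnity]

theorem sq_eq_trace_smul_sub_one {R : Type*} [CommRing R] (A : SL(2, R)) :
    (A : Matrix (Fin 2) (Fin 2) R) ^ 2 = (A : Matrix (Fin 2) (Fin 2) R).trace • A - 1 := by
  have hdet : A 0 0 * A 1 1 - A 0 1 * A 1 0 = 1 := by rw [← det_fin_two]; exact A.2
  ext i j
  fin_cases i <;> fin_cases j <;>
    simp [sq, mul_apply, Fin.sum_univ_two, trace_fin_two]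
  · linear_combination -hdet
  · ring
  · ring
  · linear_combination -hdet

theorem trace_sq {R : Type*} [CommRing R] (A : SL(2, R)) :
    ((A : Matrix (Fin 2) (Fin 2) R) ^ 2).trace = (A : Matrix (Fin 2) (Fin 2) R).trace ^ 2 - 2 := by
  rw [sq_eq_trace_smul_sub_one, trace_sub, trace_smul, trace_one, Fintype.card_fin, smul_eq_mul,
    sq, Nat.cast_two]

theorem mem_center_of_sq_mem_center {F : Type*} [Field F] {B : SL(2, F)}
    (hB : B ^ 2 ∈ Subgroup.center SL(2, F)) (htr : (B : Matrix (Fin 2) (Fin 2) F).trace ≠ 0) :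
    B ∈ Subgroup.center SL(2, F) := by
  set t := (B : Matrix (Fin 2) (Fin 2) F).trace
  obtain ⟨r, -, hr⟩ := mem_center_iff.mp hB
  have hscalar : (B : Matrix (Fin 2) (Fin 2) F) = (t⁻¹ * (r + 1)) • 1 := by
    have h : t • (B : Matrix (Fin 2) (Fin 2) F) = (r + 1) • 1 := by
      rw [add_smul, one_smul, smul_one_eq_diagonal, ← scalar_apply, hr, coe_pow,
        sq_eq_trace_smul_sub_one, sub_add_cancel]
    rw [mul_smul, ← h, smul_smul, inv_mul_cancel₀ htr, one_smul]
  refine Subgroup.mem_center_iff.mpr fun g => Subtype.ext ?_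
  rw [coe_mul, coe_mul, hscalar, Matrix.mul_smul, Matrix.smul_mul, Matrix.mul_one,
    Matrix.one_mul]

theorem sq_mem_center_of_pow_four_mem_center {F : Type*} [Field F] (h2 : ¬IsSquare (2 : F))
    {A : SL(2, F)} (hA : A ^ 4 ∈ Subgroup.center SL(2, F)) : A ^ 2 ∈ Subgroup.center SL(2, F) := by
  refine mem_center_of_sq_mem_center (by rwa [← pow_mul]) fun htr =>
    h2 ⟨(A : Matrix (Fin 2) (Fin 2) F).trace, ?_⟩
  rw [coe_pow, trace_sq, sub_eq_zero] at htr
  rw [← htr, sq]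

end Matrix.SpecialLinearGroup

namespace Matrix.ProjectiveSpecialLinearGroup

theorem sq_eq_one_of_pow_four_eq_one {F : Type*} [Field F] (h2 : ¬IsSquare (2 : F))
    {g : PSL(2, F)} (hg : g ^ 4 = 1) : g ^ 2 = 1 := by
  induction g using QuotientGroup.induction_on with | H A =>
  rw [← QuotientGroup.mk_pow, QuotientGroup.eq_one_iff] at hg ⊢
  exact SpecialLinearGroup.sq_mem_center_of_pow_four_mem_center h2 hg

theorem isKleinFour_of_card_eq_four {F : Type*} [Field F] (h2 : ¬IsSquare (2 : F))
    {H : Subgroup PSL(2, F)} (hH : Nat.card H = 4) : IsKleinFour H :=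
  .of_card_eq_four hH fun g => Subtype.ext <| sq_eq_one_of_pow_four_eq_one h2 <| by
    simpa [hH] using congrArg Subtype.val (pow_card_eq_one' (G := H) (x := g))

end Matrix.ProjectiveSpecialLinearGroup

namespace Matrix

theorem card_SL_mul_card_units {n R : Type*} [Fintype n] [DecidableEq n] [Nonempty n]
    [CommRing R] :
    Nat.card (SpecialLinearGroup n R) * Nat.card Rˣ = Nat.card (GL n R) := by
  have hker : (GeneralLinearGroup.det : GL n R →* Rˣ).ker = SpecialLinearGroup.toGL.range := by
    ext g
    refine ⟨fun hg => ⟨⟨g, by simpa using congrArg Units.val (MonoidHom.mem_ker.mp hg)⟩,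
      Units.ext rfl⟩, ?_⟩
    rintro ⟨A, rfl⟩
    exact MonoidHom.mem_ker.mpr (Units.ext A.2)
  rw [← Subgroup.card_mul_index GeneralLinearGroup.det.ker, Subgroup.index_ker,
    MonoidHom.range_eq_top.mpr GeneralLinearGroup.det_surjective, Subgroup.card_top, hker,
    Nat.card_congr (MonoidHom.ofInjective SpecialLinearGroup.toGL_injective).toEquiv]

theorem card_SL_two_field {F : Type*} [Field F] [Fintype F] :
    Nat.card SL(2, F) = Fintype.card F * (Fintype.card F ^ 2 - 1) := by
  set q := Fintype.card F
  have hq : 1 < q := Fintype.one_lt_card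
  have h := card_SL_mul_card_units (n := Fin 2) (R := F)
  rw [card_GL_field, Fin.prod_univ_two, Nat.card_units, Nat.card_eq_fintype_card (α := F)] at h
  refine Nat.eq_of_mul_eq_mul_right (by omega : 0 < q - 1) ?_
  rw [h]
  simp only [Fin.val_zero, Fin.val_one, pow_zero, pow_one]
  rw [sq, ← Nat.mul_sub_one]
  ring

theorem card_PSL_two_mul_two {F : Type*} [Field F] [Fintype F] (hF : ringChar F ≠ 2) :
    Nat.card PSL(2, F) * 2 = Fintype.card F * (Fintype.card F ^ 2 - 1) := by
  rw [← card_SL_two_field, Subgroup.card_eq_card_quotient_mul_card_subgroup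
    (Subgroup.center SL(2, F)), SpecialLinearGroup.card_center_fin_two hF]

end Matrix

/-- If `q ≡ ±3 (mod 8)`, then every Sylow `2`-subgroup of `PSL(2, F)` is a Klein
four-group, i.e. isomorphic to `C₂ × C₂`. -/
theorem sylow_two_psl_klein_four
    (F : Type*) [Field F] [Fintype F] (q : ℕ) (hq : Fintype.card F = q)
    (hmod : q % 8 = 3 ∨ q % 8 = 5) :
    ∀ P : Sylow 2 PSL(2, F),
      Nonempty ((P : Subgroup PSL(2, F)) ≃*
        (Multiplicative (ZMod 2) × Multiplicative (ZMod 2))) := by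
  intro P
  subst hq
  have h2 : ¬IsSquare (2 : F) := FiniteField.isSquare_two_iff.not.mpr (by omega)
  have hF : ringChar F ≠ 2 := fun h => by
    have := FiniteField.even_card_of_char_two h
    omega
  have hcard : Nat.card PSL(2, F) % 8 = 4 := by
    have := card_PSL_two_mul_two hF
    have := Nat.mul_sq_sub_one_mod_sixteen hmod
    omega
  have hP : Nat.card P = 4 := by
    rw [P.card_eq_multiplicity, Nat.factorization_two_eq_two_of_mod_eight hcard]
    rfl
  have := ProjectiveSpecialLinearGroup.isKleinFour_of_card_eq_four h2 hP
  exact ⟨IsKleinFour.nonempty_mulEquiv.some.trans (MulEquiv.prodMultiplicative _ _)⟩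
end

section
/- Assume q ≡ 3 (mod 8) and let H be a subgroup of SL₂(F) of order 4. Then the normalizer of H in SL₂(F) has cardinality 2(q+1). -/
/-!
Since `q ≡ 3 (mod 4)`, `-1` is not a square in `F`. The only involution of `SL(2, F)` is `-1`,
so `H` is cyclic, generated by some `x` with `x ^ 2 = -1`; such an `x` is traceless. Conjugation
by an element of the normalizer sends `x` to `x` or to `x⁻¹ = -x`, so the normalizer is the
centralizer `C` of `x` together with a coset `τ C`, where `τ x τ⁻¹ = -x`. As `x` is not scalar,
`C` consists of the `α + β x` of determinant `α ^ 2 + β ^ 2 = 1`, a conic with `q + 1` points.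
For `τ` one can take `J (u + v x)` with `J` a matrix anticommuting with `x` and
`u ^ 2 + v ^ 2 = (det J)⁻¹`, which is solvable since every element of a finite field is a sum of
two squares.
-/

open Matrix Subgroup
open scoped MatrixGroups Pointwise

section Group

variable {G : Type*} [Group G]

theorem exists_mem_orderOf_eq_four {H : Subgroup G} (hH : Nat.card H = 4) {z : G}
    (hsq : ∀ y : G, y ^ 2 = 1 → y = 1 ∨ y = z) : ∃ x ∈ H, orderOf x = 4 := by
  by_contra! hne
  have hsub : (H : Set G) ⊆ {1, z} := by
    intro y hy
    have hdvd : orderOf y ∣ 4 := hH ▸ H.orderOf_dvd_natCard hy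
    obtain ⟨k, hk, hyk⟩ := (Nat.dvd_prime_pow (m := 2) Nat.prime_two).mp hdvd
    have hk1 : k ≤ 1 := by
      by_contra! h
      exact hne y hy (by rw [hyk, show k = 2 by omega]; rfl)
    exact hsq y (orderOf_dvd_iff_pow_eq_one.mp (hyk ▸ Nat.pow_dvd_pow 2 hk1))
  have hcard := (Set.ncard_le_ncard hsub).trans (Set.ncard_insert_le 1 {z})
  rw [Set.ncard_singleton, ← Nat.card_coe_set_eq, SetLike.coe_sort_coe, hH] at hcard
  omega

theorem mem_zpowers_iff_eq_or_eq_inv_of_orderOf_eq_four {x y : G} (hx : orderOf x = 4)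
    (hy : orderOf y = 4) : y ∈ zpowers x ↔ y = x ∨ y = x⁻¹ := by
  refine ⟨fun h => ?_, ?_⟩
  · have hfin : IsOfFinOrder x := orderOf_pos_iff.mp (by omega)
    obtain ⟨n, rfl⟩ := hfin.mem_powers_iff_mem_zpowers.mpr h
    dsimp only at hy ⊢
    rw [← pow_mod_orderOf, hx] at hy ⊢
    have : n % 4 < 4 := Nat.mod_lt _ (by norm_num)
    interval_cases n % 4
    · simp at hy
    · simp
    · rw [orderOf_pow' x two_ne_zero, hx] at hy
      norm_num at hy
    · refine Or.inr (eq_inv_of_mul_eq_one_left ?_)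
      rw [← pow_succ, show 3 + 1 = orderOf x by omega, pow_orderOf_eq_one]
  · rintro (rfl | rfl)
    · exact mem_zpowers y
    · exact inv_mem (mem_zpowers x)

theorem mem_normalizer_zpowers_iff [Finite G] {x g : G} :
    g ∈ normalizer (zpowers x : Set G) ↔ g * x * g⁻¹ ∈ zpowers x := by
  refine ⟨fun hg => (mem_normalizer_iff.mp hg x).mp (mem_zpowers x), fun hg => ?_⟩
  refine mem_normalizer_fintype fun n hn => ?_
  obtain ⟨k, rfl⟩ := mem_zpowers_iff.mp hn
  rw [SetLike.mem_coe, ← conj_zpow]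
  exact zpow_mem hg k

theorem card_setOf_conj_eq_or_eq_inv [Finite G] {x τ : G} (hx : x⁻¹ ≠ x)
    (hτ : τ * x * τ⁻¹ = x⁻¹) :
    Nat.card {g : G // g * x * g⁻¹ = x ∨ g * x * g⁻¹ = x⁻¹} =
      2 * Nat.card (centralizer {x}) := by
  set C : Set G := (centralizer {x} : Set G)
  have hC (g : G) : g ∈ C ↔ g * x * g⁻¹ = x := by
    rw [SetLike.mem_coe, mem_centralizer_singleton_iff, mul_inv_eq_iff_eq_mul]
  have hτC (g : G) : g ∈ τ • C ↔ g * x * g⁻¹ = x⁻¹ := by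
    rw [Set.mem_smul_set_iff_inv_smul_mem, hC, smul_eq_mul, ← hτ]
    constructor <;> intro h
    · calc g * x * g⁻¹ = τ * ((τ⁻¹ * g) * x * (τ⁻¹ * g)⁻¹) * τ⁻¹ := by group
        _ = τ * x * τ⁻¹ := by rw [h]
    · calc τ⁻¹ * g * x * (τ⁻¹ * g)⁻¹ = τ⁻¹ * (g * x * g⁻¹) * τ := by group
        _ = x := by rw [h]; group
  have hdisj : Disjoint C (τ • C) := Set.disjoint_left.mpr fun g h₁ h₂ =>
    hx (((hτC g).mp h₂).symm.trans ((hC g).mp h₁))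
  have hunion : {g : G | g * x * g⁻¹ = x ∨ g * x * g⁻¹ = x⁻¹} = C ∪ τ • C := by
    ext g
    rw [Set.mem_union, hC, hτC]
    rfl
  rw [← Set.coe_ofPred, Nat.card_coe_set_eq, hunion, Set.ncard_union_eq hdisj, Set.ncard_smul_set,
    ← Nat.card_coe_set_eq, two_mul]
  rfl

theorem card_normalizer_zpowers_of_orderOf_eq_four [Finite G] {x τ : G} (hx : orderOf x = 4)
    (hτ : τ * x * τ⁻¹ = x⁻¹) :
    Nat.card (normalizer (zpowers x : Set G)) = 2 * Nat.card (centralizer {x}) := by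
  have hinv : x⁻¹ ≠ x := fun h => by
    have h2 : orderOf x ∣ 2 := orderOf_dvd_of_pow_eq_one (sq x ▸ inv_eq_iff_mul_eq_one.mp h)
    rw [hx] at h2
    norm_num at h2
  rw [← card_setOf_conj_eq_or_eq_inv hinv hτ]
  refine Nat.card_congr (Equiv.subtypeEquivRight fun g => ?_)
  rw [mem_normalizer_zpowers_iff, mem_zpowers_iff_eq_or_eq_inv_of_orderOf_eq_four hx
    (((SemiconjBy.conj_mk g x).orderOf_eq g).symm.trans hx)]

end Group

section NotIsSquareNegOne

variable {R : Type*} [CommRing R]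

theorem one_add_sq_ne_zero_of_not_isSquare_neg_one (hR : ¬IsSquare (-1 : R)) (t : R) :
    1 + t ^ 2 ≠ 0 :=
  fun h => hR ⟨t, by linear_combination -h⟩

theorem two_ne_zero_of_not_isSquare_neg_one (hR : ¬IsSquare (-1 : R)) : (2 : R) ≠ 0 := by
  simpa [one_add_one_eq_two] using one_add_sq_ne_zero_of_not_isSquare_neg_one hR 1

end NotIsSquareNegOne

open Polynomial in
theorem FiniteField.exists_sq_add_sq {F : Type*} [Field F] [Fintype F] (c : F) :
    ∃ a b : F, a ^ 2 + b ^ 2 = c := by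
  by_cases hF : ringChar F = 2
  · obtain ⟨a, ha⟩ := FiniteField.isSquare_of_char_two hF c
    exact ⟨a, 0, by rw [ha]; ring⟩
  · obtain ⟨a, b, hab⟩ := FiniteField.exists_root_sum_quadratic (f := X ^ 2) (g := X ^ 2 - C c)
      (degree_X_pow 2) (degree_X_pow_sub_C (by norm_num) _) (FiniteField.odd_card_of_char_ne_two hF)
    refine ⟨a, b, ?_⟩
    simp only [eval_pow, eval_X, eval_sub, eval_C] at hab
    linear_combination hab

def unitCircle (R : Type*) [CommRing R] : Set (R × R) := {v | v.1 ^ 2 + v.2 ^ 2 = 1}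

section UnitCircle

variable {F : Type*} [Field F]

/- Stereographic projection from `(-1, 0)`. -/
open Classical in
noncomputable def optionEquivUnitCircle (hF : ¬IsSquare (-1 : F)) : Option F ≃ unitCircle F where
  toFun o := o.elim ⟨(-1, 0), by norm_num [unitCircle]⟩
    (fun t => ⟨((1 - t ^ 2) / (1 + t ^ 2), 2 * t / (1 + t ^ 2)), by
      have := one_add_sq_ne_zero_of_not_isSquare_neg_one hF t
      simp only [unitCircle, Set.mem_ofPred_eq]
      field_simp
      ring⟩)
  invFun v := if v.1.1 = -1 then none else some (v.1.2 / (1 + v.1.1))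
  left_inv o := by
    have h2 := two_ne_zero_of_not_isSquare_neg_one hF
    cases o with
    | none => simp
    | some t =>
      have ht := one_add_sq_ne_zero_of_not_isSquare_neg_one hF t
      have hne : (1 - t ^ 2) / (1 + t ^ 2) ≠ -1 := by
        rw [Ne, div_eq_iff ht]
        intro h
        exact h2 (by linear_combination h)
      simp only [Option.elim, hne, if_false, Option.some.injEq]
      field_simp
      rw [show (1 : F) + t ^ 2 + (1 - t ^ 2) = 2 by ring, mul_div_cancel_left₀ t h2]
  right_inv v := by
    obtain ⟨⟨a, b⟩, hv : a ^ 2 + b ^ 2 = 1⟩ := v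
    by_cases ha : a = -1
    · subst ha
      obtain rfl : b = 0 := pow_eq_zero_iff two_ne_zero |>.mp (by linear_combination hv)
      simp
    · have ha' : 1 + a ≠ 0 := fun h => ha (by linear_combination h)
      have ht := one_add_sq_ne_zero_of_not_isSquare_neg_one hF (b / (1 + a))
      simp only [ha, if_false, Option.elim]
      refine Subtype.ext (Prod.ext ?_ ?_)
      · rw [div_eq_iff ht]
        field_simp
        linear_combination (-1 - a) * hv
      · rw [div_eq_iff ht]
        field_simp
        linear_combination (-b) * hv

theorem card_unitCircle [Fintype F] (hF : ¬IsSquare (-1 : F)) :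
    Nat.card (unitCircle F) = Fintype.card F + 1 := by
  rw [← Nat.card_congr (optionEquivUnitCircle hF), Nat.card_eq_fintype_card, Fintype.card_option]

end UnitCircle

namespace Matrix

theorem det_smul_one_add_smul_fin_two {R : Type*} [CommRing R] (α β : R)
    (M : Matrix (Fin 2) (Fin 2) R) :
    det (α • 1 + β • M) = α ^ 2 + α * β * trace M + β ^ 2 * det M := by
  simp only [det_fin_two, trace_fin_two, add_apply, smul_apply, one_apply_eq, smul_eq_mul,
    one_apply_ne zero_ne_one, one_apply_ne one_ne_zero]
  ring

theorem commute_smul_one_add_smul {R n : Type*} [CommRing R] [Fintype n] [DecidableEq n]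
    (α β : R) (M : Matrix n n R) : Commute (α • 1 + β • M) M :=
  ((Commute.one_left M).smul_left α).add_left ((Commute.refl M).smul_left β)

theorem commute_iff_exists_eq_smul_one_add_smul {K : Type*} [Field K]
    {M : Matrix (Fin 2) (Fin 2) K} (hM : M 0 1 ≠ 0) {g : Matrix (Fin 2) (Fin 2) K} :
    Commute g M ↔ ∃ α β : K, g = α • 1 + β • M := by
  refine ⟨fun h => ?_, fun ⟨α, β, hg⟩ => hg ▸ commute_smul_one_add_smul α β M⟩
  have h' := congrFun₂ h.eq
  simp only [mul_apply, Fin.sum_univ_two] at h'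
  refine ⟨g 0 0 - g 0 1 / M 0 1 * M 0 0, g 0 1 / M 0 1, ?_⟩
  ext i j
  fin_cases i <;> fin_cases j <;>
    simp only [Fin.zero_eta, Fin.mk_one, add_apply, smul_apply, smul_eq_mul, one_apply_eq,
      one_apply_ne zero_ne_one, one_apply_ne one_ne_zero, mul_one, mul_zero, zero_add]
  · ring
  · field_simp
  · field_simp
    linear_combination -h' 0 0
  · field_simp
    linear_combination -h' 0 1

theorem smul_one_add_smul_inj {K : Type*} [Field K] {M : Matrix (Fin 2) (Fin 2) K}
    (hM : M 0 1 ≠ 0) {α β α' β' : K} :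
    α • 1 + β • M = α' • 1 + β' • M ↔ α = α' ∧ β = β' := by
  refine ⟨fun h => ?_, by rintro ⟨rfl, rfl⟩; rfl⟩
  have h01 : β * M 0 1 = β' * M 0 1 := by simpa using congrFun₂ h 0 1
  have h00 : α + β * M 0 0 = α' + β' * M 0 0 := by simpa using congrFun₂ h 0 0
  obtain rfl := mul_right_cancel₀ hM h01
  exact ⟨add_right_cancel h00, rfl⟩

/- Traceless `A`, `B` satisfy `A * B + B * A = trace (A * B) • 1`; the matrix `J` below is
traceless with `trace (J * M) = 0`. -/
theorem mul_eq_neg_mul_of_trace_eq_zero {R : Type*} [CommRing R] {M : Matrix (Fin 2) (Fin 2) R}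
    (hM : trace M = 0) :
    !![0, M 0 1; -M 1 0, 0] * M = -(M * !![0, M 0 1; -M 1 0, 0]) := by
  rw [trace_fin_two] at hM
  ext i j
  fin_cases i <;> fin_cases j <;>
    simp only [Fin.zero_eta, Fin.mk_one, mul_apply, Fin.sum_univ_two, of_apply, cons_val',
      cons_val_zero, cons_val_one, cons_val_fin_one, neg_apply, zero_mul, mul_zero, zero_add,
      add_zero, neg_mul, mul_neg, neg_neg]
  · linear_combination M 0 1 * hM
  · linear_combination -M 1 0 * hM

end Matrix

namespace Matrix.SpecialLinearGroup

section CommRing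

variable {R : Type*} [CommRing R]

theorem apply_eq_of_inv_eq {g h : SL(2, R)} (hg : g⁻¹ = h) :
    g 1 1 = h 0 0 ∧ -g 0 1 = h 0 1 ∧ -g 1 0 = h 1 0 ∧ g 0 0 = h 1 1 := by
  subst hg
  simp [SL2_inv_expl]

theorem eq_one_or_eq_neg_one_of_sq_eq_one [NoZeroDivisors R] (h2 : (2 : R) ≠ 0) {g : SL(2, R)}
    (hg : g ^ 2 = 1) : g = 1 ∨ g = -1 := by
  obtain ⟨h11, h01, h10, -⟩ := apply_eq_of_inv_eq (inv_eq_of_mul_eq_one_right (sq g ▸ hg))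
  have hb : g 0 1 = 0 :=
    (mul_eq_zero.mp (by linear_combination -h01 : 2 * g 0 1 = 0)).resolve_left h2
  have hc : g 1 0 = 0 :=
    (mul_eq_zero.mp (by linear_combination -h10 : 2 * g 1 0 = 0)).resolve_left h2
  have hdet : g 0 0 * g 0 0 = 1 := by
    have := g.det_coe
    rw [det_fin_two] at this
    linear_combination this - g 0 0 * h11 + g 1 0 * hb
  refine (mul_self_eq_one_iff.mp hdet).imp (fun ha => ?_) (fun ha => ?_) <;>
    ext i j <;> fin_cases i <;> fin_cases j <;> simp [ha, hb, hc, h11]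

theorem trace_eq_zero_of_sq_eq_neg_one {g : SL(2, R)} (hg : g ^ 2 = -1) :
    trace (g : Matrix (Fin 2) (Fin 2) R) = 0 := by
  have hinv : g⁻¹ = -g := inv_eq_of_mul_eq_one_right (by rw [mul_neg, ← sq, hg, neg_neg])
  obtain ⟨h11, -⟩ := apply_eq_of_inv_eq hinv
  simp only [coe_neg, neg_apply] at h11
  rw [trace_fin_two, h11, add_neg_cancel]

theorem apply_zero_one_mul_apply_one_zero_ne_zero (hR : ¬IsSquare (-1 : R)) {g : SL(2, R)}
    (hg : g ^ 2 = -1) : g 0 1 * g 1 0 ≠ 0 := by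
  intro h
  have htr := trace_eq_zero_of_sq_eq_neg_one hg
  have hdet := g.det_coe
  rw [trace_fin_two] at htr
  rw [det_fin_two] at hdet
  exact hR ⟨g 0 0, by linear_combination hdet - g 0 0 * htr + h⟩

end CommRing

variable {F : Type*} [Field F]

theorem card_centralizer_eq_card_unitCircle (hF : ¬IsSquare (-1 : F)) {x : SL(2, F)}
    (hx : x ^ 2 = -1) : Nat.card (centralizer {x}) = Nat.card (unitCircle F) := by
  have hx01 : x 0 1 ≠ 0 := left_ne_zero_of_mul (apply_zero_one_mul_apply_one_zero_ne_zero hF hx)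
  have hdet (α β : F) :
      det (α • 1 + β • (x : Matrix (Fin 2) (Fin 2) F)) = α ^ 2 + β ^ 2 := by
    rw [det_smul_one_add_smul_fin_two, trace_eq_zero_of_sq_eq_neg_one hx, x.det_coe]
    ring
  symm
  refine Nat.card_eq_of_bijective
    (fun v => ⟨⟨v.1.1 • 1 + v.1.2 • x, (hdet _ _).trans v.2⟩, ?_⟩) ⟨?_, ?_⟩
  · exact mem_centralizer_singleton_iff.mpr (Subtype.ext (commute_smul_one_add_smul _ _ _).eq)
  · rintro ⟨⟨α, β⟩, _⟩ ⟨⟨α', β'⟩, _⟩ h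
    obtain ⟨rfl, rfl⟩ := (smul_one_add_smul_inj hx01).mp
      (congrArg (fun g : centralizer {x} => ((g : SL(2, F)) : Matrix (Fin 2) (Fin 2) F)) h)
    rfl
  · rintro ⟨g, hg⟩
    obtain ⟨α, β, hαβ⟩ := (commute_iff_exists_eq_smul_one_add_smul hx01).mp
      (congrArg (fun g : SL(2, F) => (g : Matrix (Fin 2) (Fin 2) F))
        (mem_centralizer_singleton_iff.mp hg))
    refine ⟨⟨(α, β), ?_⟩, Subtype.ext (Subtype.ext hαβ.symm)⟩
    show α ^ 2 + β ^ 2 = 1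
    rw [← hdet, ← hαβ, g.det_coe]

theorem exists_conj_eq_neg_of_sq_eq_neg_one [Fintype F] (hF : ¬IsSquare (-1 : F))
    {x : SL(2, F)} (hx : x ^ 2 = -1) : ∃ τ : SL(2, F), τ * x * τ⁻¹ = -x := by
  set M : Matrix (Fin 2) (Fin 2) F := (x : Matrix (Fin 2) (Fin 2) F)
  have hM := trace_eq_zero_of_sq_eq_neg_one hx
  obtain ⟨u, v, huv⟩ := FiniteField.exists_sq_add_sq (M 0 1 * M 1 0)⁻¹
  have hdet : det (!![0, M 0 1; -M 1 0, 0] * (u • 1 + v • M)) = 1 :=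
    calc _ = M 0 1 * M 1 0 * (u ^ 2 + v ^ 2) := by
          rw [det_mul, det_fin_two_of, det_smul_one_add_smul_fin_two, hM, x.det_coe]
          ring
      _ = 1 := by rw [huv, mul_inv_cancel₀ (apply_zero_one_mul_apply_one_zero_ne_zero hF hx)]
  refine ⟨⟨_, hdet⟩, mul_inv_eq_of_eq_mul (Subtype.ext ?_)⟩
  change !![0, M 0 1; -M 1 0, 0] * (u • 1 + v • M) * M =
    -M * (!![0, M 0 1; -M 1 0, 0] * (u • 1 + v • M))
  rw [mul_assoc, (commute_smul_one_add_smul u v M).eq, ← mul_assoc,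
    mul_eq_neg_mul_of_trace_eq_zero hM, neg_mul, neg_mul, mul_assoc]

theorem card_normalizer_zpowers_of_sq_eq_neg_one [Fintype F] (hF : ¬IsSquare (-1 : F))
    {x : SL(2, F)} (hx : x ^ 2 = -1) :
    Nat.card (normalizer (zpowers x : Set SL(2, F))) = 2 * (Fintype.card F + 1) := by
  have hne : (-1 : SL(2, F)) ≠ 1 := fun h => two_ne_zero_of_not_isSquare_neg_one hF <| by
    have h00 : (-1 : F) = 1 := by simpa using congrArg (fun g : SL(2, F) => g 0 0) h
    linear_combination -h00
  have hx4 : orderOf x = 4 := orderOf_eq_prime_pow (p := 2) (n := 1)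
    (by rwa [pow_one, hx]) (by rw [pow_succ, pow_one, pow_mul, hx, neg_one_sq])
  have hxinv : x⁻¹ = -x := inv_eq_of_mul_eq_one_right (by rw [mul_neg, ← sq, hx, neg_neg])
  obtain ⟨τ, hτ⟩ := exists_conj_eq_neg_of_sq_eq_neg_one hF hx
  rw [card_normalizer_zpowers_of_orderOf_eq_four hx4 (hxinv ▸ hτ),
    card_centralizer_eq_card_unitCircle hF hx, card_unitCircle hF]

end Matrix.SpecialLinearGroup

/-- If `q ≡ 3 (mod 8)` and `H` is a subgroup of `SL(2, F)` of order `4`, then the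
normalizer of `H` in `SL(2, F)` has cardinality `2 (q + 1)`. -/
theorem normalizer_order_four_card_q_add_one
    (F : Type*) [Field F] [Fintype F] (q : ℕ) (hq : Fintype.card F = q)
    (hmod : q % 8 = 3) (H : Subgroup SL(2, F)) (hH : Nat.card H = 4) :
    Nat.card (Subgroup.normalizer (H : Set SL(2, F))) = 2 * (q + 1) := by
  have hF : ¬IsSquare (-1 : F) := FiniteField.isSquare_neg_one_iff.not_left.mpr (by omega)
  have h2 := two_ne_zero_of_not_isSquare_neg_one hF
  obtain ⟨x, hxH, hx4⟩ := exists_mem_orderOf_eq_four hH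
    fun y hy => SpecialLinearGroup.eq_one_or_eq_neg_one_of_sq_eq_one h2 hy
  have hHx : zpowers x = H :=
    eq_of_le_of_card_ge (zpowers_le.mpr hxH) (by rw [hH, Nat.card_zpowers, hx4])
  have hx2 : x ^ 2 = -1 :=
    (SpecialLinearGroup.eq_one_or_eq_neg_one_of_sq_eq_one h2
      (by rw [← pow_mul, show 2 * 2 = orderOf x by omega, pow_orderOf_eq_one])).resolve_left
      (pow_ne_one_of_lt_orderOf two_ne_zero (by omega))
  rw [← hHx, SpecialLinearGroup.card_normalizer_zpowers_of_sq_eq_neg_one hF hx2, hq]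
end
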